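/- arXiv:2110.09796 — 9 statements merged into one kernel-verified Lean document; each statement's English description precedes it below -/
import Mathlib

section
/- The positive-part update operator T₊ defined by (T₊V)(s) = V(s) + E_{a∼μ}[max(δ(s,a), 0)] is a non-expansion in the sup norm: for all value functions V₁, V₂, ‖T₊V₁ − T₊V₂‖∞ ≤ ‖V₁ − V₂‖∞. -/
open Finset

/-- The positive-part update operator `T₊` is a non-expansion in the sup norm. -/
theorem Tplus_nonexpansion
    {S A : Type*} [Fintype A] (f : S → A → S) (r : S → A → ℝ)
    (μ : S → A → ℝ) (hμ0 : ∀ s a, 0 ≤ μ s a) (hμ1 : ∀ s, ∑ a, μ s a = 1)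
    (γ : ℝ) (hγ0 : 0 ≤ γ) (hγ1 : γ < 1)
    (V₁ V₂ : S → ℝ) (C : ℝ) (hC : ∀ s, |V₁ s - V₂ s| ≤ C) (s : S) :
    |(V₁ s + ∑ a, μ s a * max (r s a + γ * V₁ (f s a) - V₁ s) 0) -
      (V₂ s + ∑ a, μ s a * max (r s a + γ * V₂ (f s a) - V₂ s) 0)| ≤ C := by
  have hC0 : 0 ≤ C := le_trans (abs_nonneg _) (hC s)
  have hmax : ∀ (x y : ℝ), y + max (x - y) 0 = max x y := by
    intro x y
    rw [show (0:ℝ) = y - y by ring, max_sub_sub_right]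
    ring
  have key : ∀ a, |(V₁ s + max (r s a + γ * V₁ (f s a) - V₁ s) 0) -
      (V₂ s + max (r s a + γ * V₂ (f s a) - V₂ s) 0)| ≤ C := by
    intro a
    rw [hmax, hmax]
    refine le_trans (abs_max_sub_max_le_max _ _ _ _) (max_le ?_ ?_)
    · have : r s a + γ * V₁ (f s a) - (r s a + γ * V₂ (f s a))
          = γ * (V₁ (f s a) - V₂ (f s a)) := by ring
      rw [this, abs_mul, abs_of_nonneg hγ0]
      calc γ * |V₁ (f s a) - V₂ (f s a)| ≤ 1 * C := by
            exact mul_le_mul hγ1.le (hC _) (abs_nonneg _) zero_le_one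
        _ = C := one_mul C
    · exact hC s
  have hrw : (V₁ s + ∑ a, μ s a * max (r s a + γ * V₁ (f s a) - V₁ s) 0) -
      (V₂ s + ∑ a, μ s a * max (r s a + γ * V₂ (f s a) - V₂ s) 0)
      = ∑ a, μ s a * ((V₁ s + max (r s a + γ * V₁ (f s a) - V₁ s) 0) -
        (V₂ s + max (r s a + γ * V₂ (f s a) - V₂ s) 0)) := by
    simp only [mul_sub, mul_add, Finset.sum_sub_distrib, Finset.sum_add_distrib,
      ← Finset.sum_mul, hμ1 s, one_mul]
  rw [hrw]
  calc |∑ a, μ s a * ((V₁ s + max (r s a + γ * V₁ (f s a) - V₁ s) 0) -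
        (V₂ s + max (r s a + γ * V₂ (f s a) - V₂ s) 0))|
      ≤ ∑ a, |μ s a * ((V₁ s + max (r s a + γ * V₁ (f s a) - V₁ s) 0) -
        (V₂ s + max (r s a + γ * V₂ (f s a) - V₂ s) 0))| :=
        Finset.abs_sum_le_sum_abs _ _
    _ ≤ ∑ a, μ s a * C := by
        refine Finset.sum_le_sum fun a _ => ?_
        rw [abs_mul, abs_of_nonneg (hμ0 s a)]
        exact mul_le_mul_of_nonneg_left (key a) (hμ0 s a)
    _ = C := by rw [← Finset.sum_mul, hμ1 s, one_mul]
end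

section
/- The negative-part update operator T₋ defined by (T₋V)(s) = V(s) + E_{a∼μ}[min(δ(s,a), 0)] is a non-expansion in the sup norm: for all value functions V₁, V₂, ‖T₋V₁ − T₋V₂‖∞ ≤ ‖V₁ − V₂‖∞. -/
open Finset

private lemma min_shift (x v : ℝ) : min x v = min (x - v) 0 + v := by
  rcases le_total x v with h | h
  · rw [min_eq_left h, min_eq_left (by linarith : x - v ≤ (0:ℝ))]; ring
  · rw [min_eq_right h, min_eq_right (by linarith : (0:ℝ) ≤ x - v)]; ring

/-- The negative-part update operator `T₋` is a non-expansion in the sup norm. -/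
theorem Tminus_nonexpansion
    {S A : Type*} [Fintype A] (f : S → A → S) (r : S → A → ℝ)
    (μ : S → A → ℝ) (hμ0 : ∀ s a, 0 ≤ μ s a) (hμ1 : ∀ s, ∑ a, μ s a = 1)
    (γ : ℝ) (hγ0 : 0 ≤ γ) (hγ1 : γ < 1)
    (V₁ V₂ : S → ℝ) (C : ℝ) (hC : ∀ s, |V₁ s - V₂ s| ≤ C) (s : S) :
    |(V₁ s + ∑ a, μ s a * min (r s a + γ * V₁ (f s a) - V₁ s) 0) -
      (V₂ s + ∑ a, μ s a * min (r s a + γ * V₂ (f s a) - V₂ s) 0)| ≤ C := by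
  have hC0 : 0 ≤ C := le_trans (abs_nonneg _) (hC s)
  have key : (V₁ s + ∑ a, μ s a * min (r s a + γ * V₁ (f s a) - V₁ s) 0) -
      (V₂ s + ∑ a, μ s a * min (r s a + γ * V₂ (f s a) - V₂ s) 0)
      = ∑ a, μ s a * (min (r s a + γ * V₁ (f s a)) (V₁ s)
          - min (r s a + γ * V₂ (f s a)) (V₂ s)) := by
    symm
    calc ∑ a, μ s a * (min (r s a + γ * V₁ (f s a)) (V₁ s)
          - min (r s a + γ * V₂ (f s a)) (V₂ s))
        = ∑ a, (μ s a * min (r s a + γ * V₁ (f s a) - V₁ s) 0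
            - μ s a * min (r s a + γ * V₂ (f s a) - V₂ s) 0
            + (μ s a * V₁ s - μ s a * V₂ s)) := by
          refine Finset.sum_congr rfl fun a _ => ?_
          have e1 : min (r s a + γ * V₁ (f s a)) (V₁ s)
              = min (r s a + γ * V₁ (f s a) - V₁ s) 0 + V₁ s := by
            exact min_shift _ _
          have e2 : min (r s a + γ * V₂ (f s a)) (V₂ s)
              = min (r s a + γ * V₂ (f s a) - V₂ s) 0 + V₂ s := by
            exact min_shift _ _
          rw [e1, e2]; ring
      _ = (∑ a, μ s a * min (r s a + γ * V₁ (f s a) - V₁ s) 0)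
            - (∑ a, μ s a * min (r s a + γ * V₂ (f s a) - V₂ s) 0)
            + ((∑ a, μ s a) * V₁ s - (∑ a, μ s a) * V₂ s) := by
          rw [Finset.sum_add_distrib, Finset.sum_sub_distrib, Finset.sum_sub_distrib,
            Finset.sum_mul, Finset.sum_mul]
      _ = _ := by rw [hμ1]; ring
  rw [key]
  calc |∑ a, μ s a * (min (r s a + γ * V₁ (f s a)) (V₁ s)
          - min (r s a + γ * V₂ (f s a)) (V₂ s))|
      ≤ ∑ a, |μ s a * (min (r s a + γ * V₁ (f s a)) (V₁ s)
          - min (r s a + γ * V₂ (f s a)) (V₂ s))| := Finset.abs_sum_le_sum_abs _ _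
    _ ≤ ∑ a, μ s a * C := by
        refine Finset.sum_le_sum fun a _ => ?_
        rw [abs_mul, abs_of_nonneg (hμ0 s a)]
        refine mul_le_mul_of_nonneg_left ?_ (hμ0 s a)
        refine le_trans (abs_min_sub_min_le_max _ _ _ _) (max_le ?_ (hC s))
        have : r s a + γ * V₁ (f s a) - (r s a + γ * V₂ (f s a))
            = γ * (V₁ (f s a) - V₂ (f s a)) := by ring
        rw [this, abs_mul, abs_of_nonneg hγ0]
        calc γ * |V₁ (f s a) - V₂ (f s a)| ≤ 1 * C :=
              mul_le_mul (le_of_lt hγ1) (hC _) (abs_nonneg _) zero_le_one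
          _ = C := one_mul C
    _ = C := by rw [← Finset.sum_mul, hμ1, one_mul]
end

section
/- For any τ ∈ [0,1), the one-step gradient expectile operator T_τ is a γ_τ-contraction in the sup norm, where γ_τ = 1 − 2α(1−γ)·min(τ, 1−τ), provided α ≤ 1/(2·max(τ,1−τ)). -/
open Finset

set_option maxHeartbeats 1000000

/-- One-step gradient expectile operator. -/
noncomputable def Ttau {S A : Type*} [Fintype A] (f : S → A → S) (r : S → A → ℝ)
    (μ : S → A → ℝ) (γ α τ : ℝ) (V : S → ℝ) (s : S) : ℝ :=
  V s + 2 * α * ∑ a, μ s a *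
    (τ * max (r s a + γ * V (f s a) - V s) 0 + (1 - τ) * min (r s a + γ * V (f s a) - V s) 0)

/-- Bellman expectation operator. -/
noncomputable def Tmu {S A : Type*} [Fintype A] (f : S → A → S) (r : S → A → ℝ)
    (μ : S → A → ℝ) (γ : ℝ) (V : S → ℝ) (s : S) : ℝ :=
  ∑ a, μ s a * (r s a + γ * V (f s a))

lemma gform (τ x : ℝ) : τ * max x 0 + (1 - τ) * min x 0 = x / 2 + (2 * τ - 1) * |x| / 2 := by
  rcases le_total x 0 with hx | hx
  · rw [max_eq_right hx, min_eq_left hx, abs_of_nonpos hx]; ring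
  · rw [max_eq_left hx, min_eq_right hx, abs_of_nonneg hx]; ring

lemma key2 (γ α τ m M D E C d v G : ℝ) (hγ0 : 0 ≤ γ) (hγ1 : γ ≤ 1) (hα0 : 0 ≤ α)
    (hm0 : 0 ≤ m) (hmτ : m ≤ τ) (hm1 : m ≤ 1 - τ) (hMτ : τ ≤ M) (hM1 : 1 - τ ≤ M)
    (hmm : m = τ ∨ m = 1 - τ) (hMM : M = τ ∨ M = 1 - τ)
    (hαM : 2 * α * M ≤ 1)
    (hDu : D ≤ C) (hDl : -C ≤ D) (hEu : E ≤ C) (hEl : -C ≤ E) (hC0 : 0 ≤ C)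
    (hG : G = d / 2 + (2 * τ - 1) * v / 2) (hv1 : v ≤ |d|) (hv2 : -|d| ≤ v)
    (hdx : d = γ * E - D) :
    |D + 2 * α * G| ≤ (1 - 2 * α * (1 - γ) * m) * C := by
  have hmM : m ≤ M := hmτ.trans hMτ
  have hM0 : (0:ℝ) ≤ M := hm0.trans hmM
  have h1 : 0 ≤ 1 - 2 * α * M := by linarith
  have h2 : 0 ≤ 1 - 2 * α * m := by nlinarith
  have h2α : (0:ℝ) ≤ 2 * α := by linarith
  rcases le_total d 0 with hds | hds
  · have habs : |d| = -d := abs_of_nonpos hds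
    rw [habs] at hv1 hv2
    have hGu : G ≤ m * d := by
      rcases hmm with hme | hme <;> rw [hme, hG]
      · nlinarith [mul_nonneg (by linarith : (0:ℝ) ≤ 1 - 2*τ) (by linarith : 0 ≤ v - d)]
      · nlinarith [mul_nonneg (by linarith : (0:ℝ) ≤ 2*τ - 1) (by linarith : 0 ≤ -d - v)]
    have hGl : M * d ≤ G := by
      rcases hMM with hMe | hMe <;> rw [hMe, hG]
      · nlinarith [mul_nonneg (by linarith : (0:ℝ) ≤ 2*τ - 1) (by linarith : 0 ≤ v - d)]
      · nlinarith [mul_nonneg (by linarith : (0:ℝ) ≤ 1 - 2*τ) (by linarith : 0 ≤ -d - v)]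
    rw [abs_le]
    constructor
    · have p1 : 0 ≤ (1 - 2 * α * M) * (C + D) := mul_nonneg h1 (by linarith)
      have p2 : 0 ≤ 2 * α * γ * M * (C + E) :=
        mul_nonneg (mul_nonneg (mul_nonneg h2α hγ0) hM0) (by linarith)
      have p3 : 0 ≤ 2 * α * (1 - γ) * (M - m) * C :=
        mul_nonneg (mul_nonneg (mul_nonneg h2α (by linarith)) (by linarith)) hC0
      have p4 : 0 ≤ 2 * α * (G - M * d) := mul_nonneg h2α (by linarith)
      nlinarith [p1, p2, p3, p4]
    · have p1 : 0 ≤ (1 - 2 * α * m) * (C - D) := mul_nonneg h2 (by linarith)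
      have p2 : 0 ≤ 2 * α * γ * m * (C - E) :=
        mul_nonneg (mul_nonneg (mul_nonneg h2α hγ0) hm0) (by linarith)
      have p4 : 0 ≤ 2 * α * (m * d - G) := mul_nonneg h2α (by linarith)
      nlinarith [p1, p2, p4]
  · have habs : |d| = d := abs_of_nonneg hds
    rw [habs] at hv1 hv2
    have hGl : m * d ≤ G := by
      rcases hmm with hme | hme <;> rw [hme, hG]
      · nlinarith [mul_nonneg (by linarith : (0:ℝ) ≤ 1 - 2*τ) (by linarith : 0 ≤ d - v)]
      · nlinarith [mul_nonneg (by linarith : (0:ℝ) ≤ 2*τ - 1) (by linarith : 0 ≤ v + d)]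
    have hGu : G ≤ M * d := by
      rcases hMM with hMe | hMe <;> rw [hMe, hG]
      · nlinarith [mul_nonneg (by linarith : (0:ℝ) ≤ 2*τ - 1) (by linarith : 0 ≤ d - v)]
      · nlinarith [mul_nonneg (by linarith : (0:ℝ) ≤ 1 - 2*τ) (by linarith : 0 ≤ v + d)]
    rw [abs_le]
    constructor
    · have p1 : 0 ≤ (1 - 2 * α * m) * (C + D) := mul_nonneg h2 (by linarith)
      have p2 : 0 ≤ 2 * α * γ * m * (C + E) :=
        mul_nonneg (mul_nonneg (mul_nonneg h2α hγ0) hm0) (by linarith)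
      have p4 : 0 ≤ 2 * α * (G - m * d) := mul_nonneg h2α (by linarith)
      nlinarith [p1, p2, p4]
    · have p1 : 0 ≤ (1 - 2 * α * M) * (C - D) := mul_nonneg h1 (by linarith)
      have p2 : 0 ≤ 2 * α * γ * M * (C - E) :=
        mul_nonneg (mul_nonneg (mul_nonneg h2α hγ0) hM0) (by linarith)
      have p3 : 0 ≤ 2 * α * (1 - γ) * (M - m) * C :=
        mul_nonneg (mul_nonneg (mul_nonneg h2α (by linarith)) (by linarith)) hC0
      have p4 : 0 ≤ 2 * α * (M * d - G) := mul_nonneg h2α (by linarith)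
      nlinarith [p1, p2, p3, p4]

lemma key (γ α τ D E C : ℝ) (hγ0 : 0 ≤ γ) (hγ1 : γ ≤ 1) (hα0 : 0 ≤ α)
    (hτ0 : 0 ≤ τ) (hτ1 : τ ≤ 1) (hαM : 2 * α * max τ (1 - τ) ≤ 1)
    (hD : |D| ≤ C) (hE : |E| ≤ C) (x₁ x₂ : ℝ) (hx : x₁ - x₂ = γ * E - D) :
    |D + 2 * α * ((τ * max x₁ 0 + (1 - τ) * min x₁ 0)
      - (τ * max x₂ 0 + (1 - τ) * min x₂ 0))| ≤ (1 - 2 * α * (1 - γ) * min τ (1 - τ)) * C := by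
  have hC0 : 0 ≤ C := (abs_nonneg D).trans hD
  refine key2 γ α τ (min τ (1 - τ)) (max τ (1 - τ)) D E C (x₁ - x₂) (|x₁| - |x₂|)
    ((τ * max x₁ 0 + (1 - τ) * min x₁ 0) - (τ * max x₂ 0 + (1 - τ) * min x₂ 0))
    hγ0 hγ1 hα0 (le_min hτ0 (by linarith)) (min_le_left _ _) (min_le_right _ _)
    (le_max_left _ _) (le_max_right _ _) (min_cases τ (1-τ) |>.imp And.left And.left)
    (max_cases τ (1-τ) |>.imp And.left And.left) hαM
    (le_of_abs_le hD) (neg_le_of_abs_le hD) (le_of_abs_le hE) (neg_le_of_abs_le hE) hC0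
    (by rw [gform, gform]; ring) ?_ ?_ hx
  · linarith [abs_sub_abs_le_abs_sub x₁ x₂]
  · have := abs_sub_abs_le_abs_sub x₂ x₁
    rw [abs_sub_comm] at this; linarith

/-- The one-step gradient expectile operator is a contraction with rate
`1 - 2α(1-γ)·min(τ,1-τ)` in the sup norm. -/
theorem Ttau_contraction
    {S A : Type*} [Fintype A] (f : S → A → S) (r : S → A → ℝ)
    (μ : S → A → ℝ) (hμ0 : ∀ s a, 0 ≤ μ s a) (hμ1 : ∀ s, ∑ a, μ s a = 1)
    (γ α τ : ℝ) (hγ0 : 0 ≤ γ) (hγ1 : γ < 1) (hα0 : 0 < α)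
    (hτ0 : 0 ≤ τ) (hτ1 : τ < 1) (hα1 : α ≤ 1 / (2 * max τ (1 - τ)))
    (V₁ V₂ : S → ℝ) (C : ℝ) (hC : ∀ s, |V₁ s - V₂ s| ≤ C) (s : S) :
    |Ttau f r μ γ α τ V₁ s - Ttau f r μ γ α τ V₂ s|
      ≤ (1 - 2 * α * (1 - γ) * min τ (1 - τ)) * C := by
  have hM0 : 0 < max τ (1 - τ) := lt_of_lt_of_le (by linarith) (le_max_right _ _)
  have hαM : 2 * α * max τ (1 - τ) ≤ 1 := by
    rw [le_div_iff₀ (by linarith : 0 < 2 * max τ (1 - τ))] at hα1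
    linarith [hα1]
  set g : ℝ → ℝ := fun x => τ * max x 0 + (1 - τ) * min x 0 with hg
  set δ₁ : A → ℝ := fun a => r s a + γ * V₁ (f s a) - V₁ s with hδ₁
  set δ₂ : A → ℝ := fun a => r s a + γ * V₂ (f s a) - V₂ s with hδ₂
  have hsum : ∑ a, μ s a * ((V₁ s - V₂ s) + 2 * α * (g (δ₁ a) - g (δ₂ a)))
      = (V₁ s - V₂ s) + 2 * α * ((∑ a, μ s a * g (δ₁ a)) - ∑ a, μ s a * g (δ₂ a)) := by
    have e1 : ∀ a : A, μ s a * ((V₁ s - V₂ s) + 2 * α * (g (δ₁ a) - g (δ₂ a)))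
        = μ s a * (V₁ s - V₂ s) + 2 * α * (μ s a * g (δ₁ a)) - 2 * α * (μ s a * g (δ₂ a)) :=
      fun a => by ring
    simp only [e1]
    rw [Finset.sum_sub_distrib, Finset.sum_add_distrib, ← Finset.sum_mul, hμ1,
      ← Finset.mul_sum, ← Finset.mul_sum]
    ring
  have hrew : Ttau f r μ γ α τ V₁ s - Ttau f r μ γ α τ V₂ s
      = ∑ a, μ s a * ((V₁ s - V₂ s) + 2 * α * (g (δ₁ a) - g (δ₂ a))) := by
    rw [hsum]
    simp only [Ttau, hg, hδ₁, hδ₂]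
    ring
  rw [hrew]
  calc |∑ a, μ s a * ((V₁ s - V₂ s) + 2 * α * (g (δ₁ a) - g (δ₂ a)))|
      ≤ ∑ a, |μ s a * ((V₁ s - V₂ s) + 2 * α * (g (δ₁ a) - g (δ₂ a)))| :=
        Finset.abs_sum_le_sum_abs _ _
    _ ≤ ∑ a, μ s a * ((1 - 2 * α * (1 - γ) * min τ (1 - τ)) * C) := by
        apply Finset.sum_le_sum
        intro a _
        rw [abs_mul, abs_of_nonneg (hμ0 s a)]
        apply mul_le_mul_of_nonneg_left _ (hμ0 s a)
        exact key γ α τ (V₁ s - V₂ s) (V₁ (f s a) - V₂ (f s a)) C hγ0 hγ1.le hα0.le hτ0 hτ1.le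
          hαM (hC s) (hC (f s a)) (δ₁ a) (δ₂ a) (by simp only [hδ₁, hδ₂]; ring)
    _ = (1 - 2 * α * (1 - γ) * min τ (1 - τ)) * C := by
        rw [← Finset.sum_mul, hμ1, one_mul]
end

section
/- In a finite deterministic MDP where the behavior policy μ has full support, the fixed points V*_τ of the one-step gradient expectile operators converge pointwise to the optimal value V* as τ → 1 (with step size α = 1/(2max(τ,1−τ))). Equivalently: for every ε > 0 there exists τ₀ < 1 such that for all τ ∈ (τ₀, 1), ‖V*_τ − V*‖∞ ≤ ε. -/
open Finset

/-- As the expectile level tends to 1 (with step size `1/(2 max(τ,1-τ))`), the fixed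
points of the one-step gradient expectile operators converge to the optimal value. -/
theorem Ttau_fixed_points_tendsto_Vstar
    {S A : Type*} [Fintype S] [Fintype A] [Nonempty A] (f : S → A → S) (r : S → A → ℝ)
    (μ : S → A → ℝ) (hμ0 : ∀ s a, 0 < μ s a) (hμ1 : ∀ s, ∑ a, μ s a = 1)
    (γ : ℝ) (hγ0 : 0 ≤ γ) (hγ1 : γ < 1)
    (Vstar : S → ℝ)
    (hVstar : ∀ s, Vstar s =
      Finset.univ.sup' Finset.univ_nonempty (fun a => r s a + γ * Vstar (f s a)))
    (ε : ℝ) (hε : 0 < ε) :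
    ∃ τ₀ : ℝ, τ₀ < 1 ∧ ∀ τ : ℝ, τ₀ < τ → τ < 1 →
      ∀ Vτ : S → ℝ,
        (∀ s, Ttau f r μ γ (1 / (2 * max τ (1 - τ))) τ Vτ s = Vτ s) →
        ∀ s, |Vτ s - Vstar s| ≤ ε := by
  classical
  by_cases hS : Nonempty S
  swap
  · exact ⟨1/2, by norm_num, fun τ _ _ Vτ _ s => absurd ⟨s⟩ hS⟩
  have hSA : (Finset.univ : Finset (S × A)).Nonempty := univ_nonempty
  set m : ℝ := (Finset.univ : Finset (S × A)).inf' hSA (fun p => μ p.1 p.2) with hm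
  clear_value m
  have hm0 : 0 < m := by
    rw [hm, Finset.lt_inf'_iff]
    exact fun p _ => hμ0 p.1 p.2
  have hmle : ∀ s a, m ≤ μ s a := by
    intro s a
    rw [hm]
    exact Finset.inf'_le _ (Finset.mem_univ (s, a))
  set C : ℝ := (Finset.univ : Finset (S × A)).sup' hSA
      (fun p => Vstar p.1 - (r p.1 p.2 + γ * Vstar (f p.1 p.2))) with hCdef
  clear_value C
  have hbell : ∀ s a, r s a + γ * Vstar (f s a) ≤ Vstar s := by
    intro s a
    rw [hVstar s]
    exact Finset.le_sup' (fun a => r s a + γ * Vstar (f s a)) (Finset.mem_univ a)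
  have hCle : ∀ s a, Vstar s - (r s a + γ * Vstar (f s a)) ≤ C := by
    intro s a
    rw [hCdef]
    exact Finset.le_sup'
      (fun p : S × A => Vstar p.1 - (r p.1 p.2 + γ * Vstar (f p.1 p.2))) (Finset.mem_univ (s, a))
  have hC0 : 0 ≤ C := by
    obtain ⟨s⟩ := hS
    obtain ⟨a⟩ := (inferInstance : Nonempty A)
    have := hbell s a
    have := hCle s a
    linarith
  set K : ℝ := m * (1 - γ) / 4 with hKdef
  clear_value K
  have hK0 : 0 < K := by
    rw [hKdef]
    exact div_pos (mul_pos hm0 (by linarith)) (by norm_num)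
  set η : ℝ := min (K * ε / (C + 1)) (K / (γ + 1)) with hηdef
  clear_value η
  have hη0 : 0 < η := by
    rw [hηdef]
    exact lt_min (div_pos (mul_pos hK0 hε) (by linarith)) (div_pos hK0 (by linarith))
  have hηC : η * C ≤ K * ε := by
    have h1 : η ≤ K * ε / (C + 1) := hηdef ▸ min_le_left _ _
    have h2 : K * ε / (C + 1) * C ≤ K * ε := by
      rw [div_mul_eq_mul_div, div_le_iff₀ (by linarith)]
      nlinarith
    calc η * C ≤ K * ε / (C + 1) * C := by nlinarith
    _ ≤ K * ε := h2
  have hηγ : η * γ ≤ K := by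
    have h1 : η ≤ K / (γ + 1) := hηdef ▸ min_le_right _ _
    have h2 : K / (γ + 1) * γ ≤ K := by
      rw [div_mul_eq_mul_div, div_le_iff₀ (by linarith)]
      nlinarith
    calc η * γ ≤ K / (γ + 1) * γ := by nlinarith
    _ ≤ K := h2
  refine ⟨max (1/2) (1 - η), max_lt (by norm_num) (by linarith), ?_⟩
  intro τ hτ₀ hτ1 Vτ hfix
  have hτhalf : (1/2 : ℝ) < τ := lt_of_le_of_lt (le_max_left _ _) hτ₀
  have h1τη : 1 - τ < η := by
    have := lt_of_le_of_lt (le_max_right (1/2 : ℝ) _) hτ₀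
    linarith
  have h1τ0 : 0 < 1 - τ := by linarith
  have hmax : max τ (1 - τ) = τ := max_eq_left (by linarith)
  -- fixed point equation per state
  have hfix' : ∀ s, ∑ a, μ s a *
      (τ * max (r s a + γ * Vτ (f s a) - Vτ s) 0
        + (1 - τ) * min (r s a + γ * Vτ (f s a) - Vτ s) 0) = 0 := by
    intro s
    have h := hfix s
    rw [Ttau, hmax] at h
    have hτ0' : (0:ℝ) < τ := by linarith
    have h2 : 2 * (1 / (2 * τ)) *
        (∑ a, μ s a * (τ * max (r s a + γ * Vτ (f s a) - Vτ s) 0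
          + (1 - τ) * min (r s a + γ * Vτ (f s a) - Vτ s) 0)) = 0 := by linarith
    have hc : 2 * (1 / (2 * τ)) = 1 / τ := by field_simp
    rw [hc] at h2
    rcases mul_eq_zero.mp h2 with h3 | h3
    · exact absurd h3 (by positivity)
    · exact h3
  -- Step A : Vτ ≤ Vstar
  have hle : ∀ s, Vτ s ≤ Vstar s := by
    by_contra hcon
    push_neg at hcon
    obtain ⟨sb, hsb⟩ := hcon
    obtain ⟨sM, -, hsM⟩ := Finset.exists_max_image Finset.univ
      (fun s => Vτ s - Vstar s) ⟨sb, Finset.mem_univ sb⟩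
    have hM0 : 0 < Vτ sM - Vstar sM := by
      have := hsM sb (Finset.mem_univ sb)
      linarith
    set M := Vτ sM - Vstar sM with hMdef
    clear_value M
    have hδneg : ∀ a, r sM a + γ * Vτ (f sM a) - Vτ sM ≤ -((1 - γ) * M) := by
      intro a
      have h1 : Vτ (f sM a) - Vstar (f sM a) ≤ M := hsM (f sM a) (Finset.mem_univ _)
      have h2 : r sM a + γ * Vstar (f sM a) ≤ Vstar sM := hbell sM a
      have h3 : γ * Vτ (f sM a) ≤ γ * (Vstar (f sM a) + M) :=
        mul_le_mul_of_nonneg_left (by linarith) hγ0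
      nlinarith
    have hterm : ∀ a ∈ (Finset.univ : Finset A), μ sM a *
        (τ * max (r sM a + γ * Vτ (f sM a) - Vτ sM) 0
          + (1 - τ) * min (r sM a + γ * Vτ (f sM a) - Vτ sM) 0) < 0 := by
      intro a _
      have hδ := hδneg a
      have hδ0 : r sM a + γ * Vτ (f sM a) - Vτ sM < 0 := by nlinarith
      rw [max_eq_right hδ0.le, min_eq_left hδ0.le]
      have : τ * 0 + (1 - τ) * (r sM a + γ * Vτ (f sM a) - Vτ sM) < 0 := by nlinarith
      exact mul_neg_of_pos_of_neg (hμ0 sM a) this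
    have hsum : (∑ a, μ sM a *
        (τ * max (r sM a + γ * Vτ (f sM a) - Vτ sM) 0
          + (1 - τ) * min (r sM a + γ * Vτ (f sM a) - Vτ sM) 0)) < ∑ a : A, (0:ℝ) :=
      Finset.sum_lt_sum_of_nonempty univ_nonempty hterm
    rw [Finset.sum_const_zero, hfix' sM] at hsum
    exact lt_irrefl _ hsum
  -- Step B : quantitative lower bound at the worst state
  obtain ⟨sD, -, hsD⟩ := Finset.exists_max_image Finset.univ
    (fun s => Vstar s - Vτ s) Finset.univ_nonempty
  set D := Vstar sD - Vτ sD with hDdef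
  clear_value D
  have hD0 : 0 ≤ D := by have := hle sD; linarith
  have hDle : ∀ s, Vstar s - Vτ s ≤ D := fun s => hsD s (Finset.mem_univ s)
  have hDε : D ≤ ε := by
    obtain ⟨astar, -, hastar⟩ := Finset.exists_mem_eq_sup' Finset.univ_nonempty
      (fun a => r sD a + γ * Vstar (f sD a))
    have hVsD : Vstar sD = r sD astar + γ * Vstar (f sD astar) := by
      rw [hVstar sD, hastar]
    -- split the fixed point sum
    set δ : A → ℝ := fun a => r sD a + γ * Vτ (f sD a) - Vτ sD with hδdef
    clear_value δ
    have hsplit : τ * (∑ a, μ sD a * max (δ a) 0)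
        + (1 - τ) * (∑ a, μ sD a * min (δ a) 0) = 0 := by
      calc τ * (∑ a, μ sD a * max (δ a) 0) + (1 - τ) * (∑ a, μ sD a * min (δ a) 0)
          = ∑ a, μ sD a * (τ * max (δ a) 0 + (1 - τ) * min (δ a) 0) := by
            rw [Finset.mul_sum, Finset.mul_sum, ← Finset.sum_add_distrib]
            exact Finset.sum_congr rfl (fun a _ => by ring)
        _ = 0 := by simp only [hδdef]; exact hfix' sD
    -- lower bound on positive part
    have hδstar : (1 - γ) * D ≤ δ astar := by
      have h1 : Vstar (f sD astar) - Vτ (f sD astar) ≤ D := hDle _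
      have h2 : γ * (Vstar (f sD astar) - D) ≤ γ * Vτ (f sD astar) :=
        mul_le_mul_of_nonneg_left (by linarith) hγ0
      rw [mul_sub] at h2
      simp only [hδdef]
      nlinarith
    have hpos : m * ((1 - γ) * D) ≤ ∑ a, μ sD a * max (δ a) 0 := by
      have h1 : μ sD astar * max (δ astar) 0 ≤ ∑ a, μ sD a * max (δ a) 0 := by
        apply Finset.single_le_sum (f := fun a => μ sD a * max (δ a) 0)
          (fun a _ => mul_nonneg (hμ0 sD a).le (le_max_right _ _)) (Finset.mem_univ astar)
      have h2 : m * ((1 - γ) * D) ≤ μ sD astar * max (δ astar) 0 := by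
        apply mul_le_mul (hmle sD astar) (le_trans hδstar (le_max_left _ _))
          (mul_nonneg (by linarith) hD0) (hμ0 sD astar).le
      linarith
    -- upper bound on negative part
    have hneg : ∑ a, μ sD a * (-min (δ a) 0) ≤ C + γ * D := by
      have hbound : ∀ a, -(C + γ * D) ≤ min (δ a) 0 := by
        intro a
        have h1 : Vstar (f sD a) - Vτ (f sD a) ≤ D := hDle _
        have h2 : γ * (Vstar (f sD a) - D) ≤ γ * Vτ (f sD a) :=
          mul_le_mul_of_nonneg_left (by linarith) hγ0
        rw [mul_sub] at h2
        have h3 := hCle sD a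
        have h4 := hle sD
        have hγD : 0 ≤ γ * D := mul_nonneg hγ0 hD0
        have hδa : -(C + γ * D) ≤ δ a := by simp only [hδdef]; linarith
        exact le_min hδa (by linarith)
      calc ∑ a, μ sD a * (-min (δ a) 0) ≤ ∑ a, μ sD a * (C + γ * D) := by
            apply Finset.sum_le_sum
            intro a _
            apply mul_le_mul_of_nonneg_left _ (hμ0 sD a).le
            have := hbound a
            linarith
        _ = C + γ * D := by rw [← Finset.sum_mul, hμ1 sD, one_mul]
    -- combine
    have hkey : τ * (m * ((1 - γ) * D)) ≤ (1 - τ) * (C + γ * D) := by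
      have h1 : τ * (m * ((1 - γ) * D)) ≤ τ * (∑ a, μ sD a * max (δ a) 0) :=
        mul_le_mul_of_nonneg_left hpos (by linarith)
      have h2 : (1 - τ) * (∑ a, μ sD a * (-min (δ a) 0)) ≤ (1 - τ) * (C + γ * D) :=
        mul_le_mul_of_nonneg_left hneg h1τ0.le
      have h3 : ∑ a, μ sD a * (-min (δ a) 0) = -∑ a, μ sD a * min (δ a) 0 := by
        rw [← Finset.sum_neg_distrib]
        exact Finset.sum_congr rfl (fun a _ => by ring)
      rw [h3] at h2
      linarith
    -- finish: 2K·D ≤ Kε + K·D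
    have h4K : m * (1 - γ) = 4 * K := by rw [hKdef]; ring
    have hfin1 : 2 * K * D ≤ τ * (m * ((1 - γ) * D)) := by
      have hmD : 0 ≤ m * ((1 - γ) * D) := mul_nonneg hm0.le (mul_nonneg (by linarith) hD0)
      have h5 : (1/2 : ℝ) * (m * ((1 - γ) * D)) ≤ τ * (m * ((1 - γ) * D)) :=
        mul_le_mul_of_nonneg_right hτhalf.le hmD
      have h6 : m * ((1 - γ) * D) = 4 * K * D := by rw [hKdef]; ring
      linarith
    have hfin2 : (1 - τ) * (C + γ * D) ≤ K * ε + K * D := by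
      have hγD : 0 ≤ γ * D := mul_nonneg hγ0 hD0
      have hc : (1 - τ) * C ≤ η * C := mul_le_mul_of_nonneg_right h1τη.le hC0
      have hd : (1 - τ) * (γ * D) ≤ η * (γ * D) := mul_le_mul_of_nonneg_right h1τη.le hγD
      have he : η * γ * D ≤ K * D := mul_le_mul_of_nonneg_right hηγ hD0
      linarith
    have h7 : K * D ≤ K * ε := by linarith
    exact le_of_mul_le_mul_left h7 hK0
  intro s
  rw [abs_le]
  constructor
  · have := hDle s
    linarith
  · have := hle s
    linarith
end

section
/- The VEM operator T_vem, defined by (T_vem V)(s) = max over n ∈ {1,…,n_max} of ((T^μ)^{n−1} T_τ V)(s), is a γ_τ-contraction in the sup norm, where γ_τ = 1 − 2α(1−γ)·min(τ,1−τ). -/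
open Finset

/-- Slope bounds for the expectile kink function. -/
lemma g_diff_bounds (τ x y : ℝ) (hτ0 : 0 < τ) (hτ1 : τ < 1) (hxy : y ≤ x) :
    min τ (1-τ) * (x - y) ≤
      (τ * max x 0 + (1-τ) * min x 0) - (τ * max y 0 + (1-τ) * min y 0) ∧
    (τ * max x 0 + (1-τ) * min x 0) - (τ * max y 0 + (1-τ) * min y 0)
      ≤ max τ (1-τ) * (x - y) := by
  have hA0 : max y 0 ≤ max x 0 := max_le_max_right 0 hxy
  have hB0 : min y 0 ≤ min x 0 := min_le_min_right 0 hxy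
  have hsum : (max x 0 - max y 0) + (min x 0 - min y 0) = x - y := by
    have h1 : max x 0 + min x 0 = x := by rcases le_total x 0 with h | h <;> simp [max_eq_right, min_eq_left, max_eq_left, min_eq_right, h]
    have h2 : max y 0 + min y 0 = y := by rcases le_total y 0 with h | h <;> simp [max_eq_right, min_eq_left, max_eq_left, min_eq_right, h]
    linarith
  have hmτ : min τ (1-τ) ≤ τ := min_le_left _ _
  have hmτ' : min τ (1-τ) ≤ 1-τ := min_le_right _ _
  have hMτ : τ ≤ max τ (1-τ) := le_max_left _ _
  have hMτ' : 1-τ ≤ max τ (1-τ) := le_max_right _ _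
  constructor
  · nlinarith [mul_nonneg (sub_nonneg.mpr hmτ) (sub_nonneg.mpr hA0),
      mul_nonneg (sub_nonneg.mpr hmτ') (sub_nonneg.mpr hB0)]
  · nlinarith [mul_nonneg (sub_nonneg.mpr hMτ) (sub_nonneg.mpr hA0),
      mul_nonneg (sub_nonneg.mpr hMτ') (sub_nonneg.mpr hB0)]

/-- Per-action one-sided contraction bound. -/
lemma phi_bound (γ α τ C ru u₁ u₂ v₁ v₂ : ℝ) (hγ0 : 0 ≤ γ) (hγ1 : γ < 1)
    (hα0 : 0 < α) (hτ0 : 0 < τ) (hτ1 : τ < 1) (hα1 : α ≤ 1 / (2 * max τ (1 - τ)))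
    (hu : |u₁ - u₂| ≤ C) (hv : |v₁ - v₂| ≤ C) :
    (u₁ + 2*α*(τ * max (ru + γ*v₁ - u₁) 0 + (1-τ) * min (ru + γ*v₁ - u₁) 0)) -
      (u₂ + 2*α*(τ * max (ru + γ*v₂ - u₂) 0 + (1-τ) * min (ru + γ*v₂ - u₂) 0))
      ≤ (1 - 2*α*(1-γ)*min τ (1-τ)) * C := by
  set x₁ := ru + γ*v₁ - u₁ with hx1
  set x₂ := ru + γ*v₂ - u₂ with hx2
  have hM0 : 0 < max τ (1-τ) := lt_of_lt_of_le hτ0 (le_max_left _ _)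
  have hαM : 2 * α * max τ (1-τ) ≤ 1 := by
    have h2M : (0:ℝ) < 2 * max τ (1-τ) := by positivity
    have := (le_div_iff₀ h2M).mp hα1
    nlinarith [this]
  have hm0 : 0 < min τ (1-τ) := lt_min hτ0 (by linarith)
  have hmM : min τ (1-τ) ≤ max τ (1-τ) := min_le_max
  have hu1 : u₁ - u₂ ≤ C := (abs_le.mp hu).2
  have hu2 : -C ≤ u₁ - u₂ := (abs_le.mp hu).1
  have hv1 : v₁ - v₂ ≤ C := (abs_le.mp hv).2
  have hv2 : -C ≤ v₁ - v₂ := (abs_le.mp hv).1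
  have hC0 : 0 ≤ C := le_trans (abs_nonneg _) hu
  rcases le_total x₂ x₁ with hc | hc
  · obtain ⟨hlo, hhi⟩ := g_diff_bounds τ x₁ x₂ hτ0 hτ1 hc
    have hx12 : x₁ - x₂ = γ*(v₁-v₂) - (u₁-u₂) := by rw [hx1, hx2]; ring
    nlinarith [mul_nonneg hα0.le (sub_nonneg.mpr hhi),
      mul_nonneg (sub_nonneg.mpr hαM) (sub_nonneg.mpr hu1),
      mul_nonneg (mul_nonneg (mul_nonneg (by norm_num : (0:ℝ) ≤ 2) hα0.le) hγ0) (mul_nonneg hM0.le (sub_nonneg.mpr hv1)),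
      mul_nonneg (mul_nonneg hα0.le (sub_nonneg.mpr hγ1.le)) (mul_nonneg (sub_nonneg.mpr hmM) hC0)]
  · obtain ⟨hlo, hhi⟩ := g_diff_bounds τ x₂ x₁ hτ0 hτ1 hc
    have hgd : (τ * max x₁ 0 + (1-τ) * min x₁ 0) - (τ * max x₂ 0 + (1-τ) * min x₂ 0)
        ≤ min τ (1-τ) * (x₁ - x₂) := by linarith
    have hgd2 : min τ (1-τ) * (x₁ - x₂) = min τ (1-τ) * (γ*(v₁-v₂) - (u₁-u₂)) := by
      rw [hx1, hx2]; ring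
    have h2 : 2*α*((τ * max x₁ 0 + (1-τ) * min x₁ 0) - (τ * max x₂ 0 + (1-τ) * min x₂ 0))
        ≤ 2*α*(min τ (1-τ) * (γ*(v₁-v₂) - (u₁-u₂))) := by
      apply mul_le_mul_of_nonneg_left _ (by positivity)
      rw [← hgd2]; exact hgd
    have hαm : 2*α*min τ (1-τ) ≤ 1 := by
      nlinarith [mul_le_mul_of_nonneg_left hmM (by positivity : (0:ℝ) ≤ 2*α)]
    have hA : (1 - 2*α*min τ (1-τ)) * (u₁-u₂) ≤ (1 - 2*α*min τ (1-τ)) * C :=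
      mul_le_mul_of_nonneg_left hu1 (by linarith)
    have hB : 2*α*γ*min τ (1-τ) * (v₁-v₂) ≤ 2*α*γ*min τ (1-τ) * C :=
      mul_le_mul_of_nonneg_left hv1 (by positivity)
    nlinarith [h2, hA, hB]

lemma sum_affine {A : Type*} [Fintype A] (w g : A → ℝ) (v c : ℝ) (hw : ∑ a, w a = 1) :
    v + c * ∑ a, w a * g a = ∑ a, w a * (v + c * g a) := by
  have h : ∑ a, w a * (v + c * g a) = ∑ a, (w a * v + c * (w a * g a)) :=
    Finset.sum_congr rfl (fun a _ => by ring)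
  rw [h, Finset.sum_add_distrib, ← Finset.sum_mul, hw, one_mul, ← Finset.mul_sum]

lemma Ttau_rewrite {S A : Type*} [Fintype A] (f : S → A → S) (r : S → A → ℝ)
    (μ : S → A → ℝ) (hμ1 : ∀ s, ∑ a, μ s a = 1) (γ α τ : ℝ) (V : S → ℝ) (s : S) :
    Ttau f r μ γ α τ V s = ∑ a, μ s a * (V s + 2*α*(τ * max (r s a + γ * V (f s a) - V s) 0
      + (1-τ) * min (r s a + γ * V (f s a) - V s) 0)) := by
  unfold Ttau
  exact sum_affine (μ s) _ (V s) (2*α) (hμ1 s)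

lemma Ttau_contract {S A : Type*} [Fintype A] (f : S → A → S) (r : S → A → ℝ)
    (μ : S → A → ℝ) (hμ0 : ∀ s a, 0 ≤ μ s a) (hμ1 : ∀ s, ∑ a, μ s a = 1)
    (γ α τ : ℝ) (hγ0 : 0 ≤ γ) (hγ1 : γ < 1) (hα0 : 0 < α)
    (hτ0 : 0 < τ) (hτ1 : τ < 1) (hα1 : α ≤ 1 / (2 * max τ (1 - τ)))
    (V₁ V₂ : S → ℝ) (C : ℝ) (hC : ∀ s, |V₁ s - V₂ s| ≤ C) (s : S) :
    |Ttau f r μ γ α τ V₁ s - Ttau f r μ γ α τ V₂ s|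
      ≤ (1 - 2 * α * (1 - γ) * min τ (1 - τ)) * C := by
  rw [Ttau_rewrite f r μ hμ1 γ α τ V₁ s, Ttau_rewrite f r μ hμ1 γ α τ V₂ s,
    ← Finset.sum_sub_distrib]
  have key : ∀ a : A, |μ s a * (V₁ s + 2*α*(τ * max (r s a + γ * V₁ (f s a) - V₁ s) 0
      + (1-τ) * min (r s a + γ * V₁ (f s a) - V₁ s) 0))
      - μ s a * (V₂ s + 2*α*(τ * max (r s a + γ * V₂ (f s a) - V₂ s) 0
      + (1-τ) * min (r s a + γ * V₂ (f s a) - V₂ s) 0))|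
      ≤ μ s a * ((1 - 2 * α * (1 - γ) * min τ (1 - τ)) * C) := by
    intro a
    rw [← mul_sub, abs_mul, abs_of_nonneg (hμ0 s a)]
    apply mul_le_mul_of_nonneg_left _ (hμ0 s a)
    rw [abs_le]
    constructor
    · have := phi_bound γ α τ C (r s a) (V₂ s) (V₁ s) (V₂ (f s a)) (V₁ (f s a))
        hγ0 hγ1 hα0 hτ0 hτ1 hα1 (by rw [abs_sub_comm]; exact hC s)
        (by rw [abs_sub_comm]; exact hC (f s a))
      linarith
    · exact phi_bound γ α τ C (r s a) (V₁ s) (V₂ s) (V₁ (f s a)) (V₂ (f s a))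
        hγ0 hγ1 hα0 hτ0 hτ1 hα1 (hC s) (hC (f s a))
  calc |∑ a, (μ s a * _ - μ s a * _)| ≤ ∑ a, |μ s a * _ - μ s a * _| :=
        Finset.abs_sum_le_sum_abs _ _
    _ ≤ ∑ a, μ s a * ((1 - 2 * α * (1 - γ) * min τ (1 - τ)) * C) :=
        Finset.sum_le_sum (fun a _ => key a)
    _ = (1 - 2 * α * (1 - γ) * min τ (1 - τ)) * C := by
        rw [← Finset.sum_mul, hμ1 s, one_mul]

lemma Tmu_iter_bound {S A : Type*} [Fintype A] (f : S → A → S) (r : S → A → ℝ)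
    (μ : S → A → ℝ) (hμ0 : ∀ s a, 0 ≤ μ s a) (hμ1 : ∀ s, ∑ a, μ s a = 1)
    (γ : ℝ) (hγ0 : 0 ≤ γ) (hγ1 : γ ≤ 1) (D : ℝ) (hD : 0 ≤ D)
    (W₁ W₂ : S → ℝ) (h : ∀ s, |W₁ s - W₂ s| ≤ D) (n : ℕ) :
    ∀ s, |(Tmu f r μ γ)^[n] W₁ s - (Tmu f r μ γ)^[n] W₂ s| ≤ D := by
  induction n with
  | zero => simpa using h
  | succ n ih =>
    intro s
    rw [Function.iterate_succ_apply', Function.iterate_succ_apply']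
    set U₁ := (Tmu f r μ γ)^[n] W₁
    set U₂ := (Tmu f r μ γ)^[n] W₂
    have hdiff : Tmu f r μ γ U₁ s - Tmu f r μ γ U₂ s
        = ∑ a, μ s a * (γ * (U₁ (f s a) - U₂ (f s a))) := by
      unfold Tmu
      rw [← Finset.sum_sub_distrib]
      apply Finset.sum_congr rfl
      intro a _
      ring
    rw [hdiff]
    calc |∑ a, μ s a * (γ * (U₁ (f s a) - U₂ (f s a)))|
        ≤ ∑ a, |μ s a * (γ * (U₁ (f s a) - U₂ (f s a)))| := Finset.abs_sum_le_sum_abs _ _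
      _ ≤ ∑ a, μ s a * D := by
          apply Finset.sum_le_sum
          intro a _
          rw [abs_mul, abs_of_nonneg (hμ0 s a), abs_mul, abs_of_nonneg hγ0]
          calc μ s a * (γ * |U₁ (f s a) - U₂ (f s a)|) ≤ μ s a * (γ * D) := by
                apply mul_le_mul_of_nonneg_left _ (hμ0 s a)
                exact mul_le_mul_of_nonneg_left (ih (f s a)) hγ0
            _ ≤ μ s a * D := by
                apply mul_le_mul_of_nonneg_left _ (hμ0 s a)
                nlinarith
      _ = D := by rw [← Finset.sum_mul, hμ1 s, one_mul]

lemma sup'_abs_sub_le {ι : Type*} (t : Finset ι) (ht : t.Nonempty) (F G : ι → ℝ)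
    (D : ℝ) (h : ∀ n ∈ t, |F n - G n| ≤ D) :
    |t.sup' ht F - t.sup' ht G| ≤ D := by
  rw [abs_sub_le_iff]
  constructor
  · rw [sub_le_iff_le_add]
    apply Finset.sup'_le
    intro n hn
    linarith [(abs_le.mp (h n hn)).2, Finset.le_sup' G hn]
  · rw [sub_le_iff_le_add]
    apply Finset.sup'_le
    intro n hn
    linarith [(abs_le.mp (h n hn)).1, Finset.le_sup' F hn]

/-- The VEM operator is a contraction with rate `1 - 2α(1-γ)·min(τ,1-τ)` in the
sup norm. -/
theorem Tvem_contraction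
    {S A : Type*} [Fintype A] (f : S → A → S) (r : S → A → ℝ)
    (μ : S → A → ℝ) (hμ0 : ∀ s a, 0 ≤ μ s a) (hμ1 : ∀ s, ∑ a, μ s a = 1)
    (γ α τ : ℝ) (hγ0 : 0 ≤ γ) (hγ1 : γ < 1) (hα0 : 0 < α)
    (hτ0 : 0 < τ) (hτ1 : τ < 1) (hα1 : α ≤ 1 / (2 * max τ (1 - τ)))
    (nmax : ℕ) (hn : 1 ≤ nmax)
    (V₁ V₂ : S → ℝ) (C : ℝ) (hC : ∀ s, |V₁ s - V₂ s| ≤ C) (s : S) :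
    |(Finset.Icc 1 nmax).sup' (Finset.nonempty_Icc.mpr hn)
        (fun n => (Tmu f r μ γ)^[n - 1] (Ttau f r μ γ α τ V₁) s) -
      (Finset.Icc 1 nmax).sup' (Finset.nonempty_Icc.mpr hn)
        (fun n => (Tmu f r μ γ)^[n - 1] (Ttau f r μ γ α τ V₂) s)|
      ≤ (1 - 2 * α * (1 - γ) * min τ (1 - τ)) * C := by
  have hC0 : 0 ≤ C := le_trans (abs_nonneg _) (hC s)
  have hM0 : 0 < max τ (1-τ) := lt_of_lt_of_le hτ0 (le_max_left _ _)
  have hαM : 2 * α * max τ (1-τ) ≤ 1 := by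
    have h2M : (0:ℝ) < 2 * max τ (1-τ) := by positivity
    have := (le_div_iff₀ h2M).mp hα1
    nlinarith [this]
  have hmM : min τ (1-τ) ≤ max τ (1-τ) := min_le_max
  have hm0 : 0 < min τ (1-τ) := lt_min hτ0 (by linarith)
  have hγτ0 : 0 ≤ 1 - 2 * α * (1 - γ) * min τ (1 - τ) := by
    nlinarith [mul_le_mul_of_nonneg_left hmM (by positivity : (0:ℝ) ≤ 2*α),
      mul_nonneg (mul_nonneg (by positivity : (0:ℝ) ≤ 2*α) hγ0) hm0.le]
  have hD : 0 ≤ (1 - 2 * α * (1 - γ) * min τ (1 - τ)) * C := mul_nonneg hγτ0 hC0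
  apply sup'_abs_sub_le
  intro n _
  exact Tmu_iter_bound f r μ hμ0 hμ1 γ hγ0 hγ1.le _ hD
    (Ttau f r μ γ α τ V₁) (Ttau f r μ γ α τ V₂)
    (Ttau_contract f r μ hμ0 hμ1 γ α τ hγ0 hγ1 hα0 hτ0 hτ1 hα1 V₁ V₂ C hC) (n-1) s
end

section
/- If τ > 1/2, then the fixed point V*_τ of the one-step gradient expectile operator T_τ satisfies V*_τ(s) ≥ (T^μ V*_τ)(s) for all s, i.e., V*_τ pointwise dominates its own one-step Bellman expectation backup. -/
open Finset

/-- For expectile level above one half, the fixed point of the one-step gradient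
expectile operator pointwise dominates its one-step Bellman expectation backup. -/
theorem fixed_point_dominates_bellman_backup
    {S A : Type*} [Fintype A] (f : S → A → S) (r : S → A → ℝ)
    (μ : S → A → ℝ) (hμ0 : ∀ s a, 0 ≤ μ s a) (hμ1 : ∀ s, ∑ a, μ s a = 1)
    (γ α τ : ℝ) (hγ0 : 0 ≤ γ) (hγ1 : γ < 1) (hα0 : 0 < α)
    (hτ : 1 / 2 < τ) (hτ1 : τ < 1) (hα1 : α ≤ 1 / (2 * τ))
    (Vτ : S → ℝ) (hfix : ∀ s, Ttau f r μ γ α τ Vτ s = Vτ s)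
    (s : S) : Tmu f r μ γ Vτ s ≤ Vτ s := by
  set δ : A → ℝ := fun a => r s a + γ * Vτ (f s a) - Vτ s with hδ
  set M : ℝ := ∑ a, μ s a * max (δ a) 0 with hM
  set m : ℝ := ∑ a, μ s a * min (δ a) 0 with hm
  have hτ0 : 0 < τ := lt_trans (by norm_num) hτ
  -- fixed point gives τ*M + (1-τ)*m = 0
  have hfix' : τ * M + (1 - τ) * m = 0 := by
    have := hfix s
    unfold Ttau at this
    have h2α : (2 : ℝ) * α ≠ 0 := by positivity
    have hsum0 : 2 * α * (∑ a, μ s a *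
        (τ * max (r s a + γ * Vτ (f s a) - Vτ s) 0 +
          (1 - τ) * min (r s a + γ * Vτ (f s a) - Vτ s) 0)) = 0 := by linarith
    have hsum := (mul_eq_zero.mp hsum0).resolve_left h2α
    have key : τ * M + (1 - τ) * m = ∑ a, μ s a *
        (τ * max (δ a) 0 + (1 - τ) * min (δ a) 0) := by
      rw [hM, hm, Finset.mul_sum, Finset.mul_sum, ← Finset.sum_add_distrib]
      apply Finset.sum_congr rfl
      intro a _
      ring
    exact key.trans hsum
  -- m ≤ 0
  have hm0 : m ≤ 0 := by
    rw [hm]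
    apply Finset.sum_nonpos
    intro a _
    exact mul_nonpos_of_nonneg_of_nonpos (hμ0 s a) (min_le_right _ _)
  -- Tmu - V = M + m
  have hdiff : Tmu f r μ γ Vτ s - Vτ s = M + m := by
    unfold Tmu
    rw [hM, hm, ← Finset.sum_add_distrib]
    have : ∑ a, (μ s a * max (δ a) 0 + μ s a * min (δ a) 0) = ∑ a, μ s a * δ a := by
      apply Finset.sum_congr rfl
      intro a _
      rw [← mul_add, max_add_min, add_zero]
    rw [this]
    have : ∑ a, μ s a * δ a = (∑ a, μ s a * (r s a + γ * Vτ (f s a))) - Vτ s := by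
      simp only [hδ, mul_sub, Finset.sum_sub_distrib, ← Finset.sum_mul, hμ1 s, one_mul]
    rw [this]
  -- M + m = (2τ-1)/τ * m ≤ 0
  have hMm : M + m ≤ 0 := by
    have hM' : τ * M = -(1 - τ) * m := by linarith
    nlinarith
  linarith
end

section
/- If τ > 1/2, the VEM operator T_vem has the same fixed point as T_τ: the unique fixed point V*_τ of T_τ satisfies max_{1 ≤ n ≤ n_max} ((T^μ)^{n−1} T_τ V*_τ)(s) = V*_τ(s) for all states s. -/
open Finset

/-- For expectile level above one half, the VEM operator has the same fixed point as
the one-step gradient expectile operator. -/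
theorem Tvem_same_fixed_point
    {S A : Type*} [Fintype A] (f : S → A → S) (r : S → A → ℝ)
    (μ : S → A → ℝ) (hμ0 : ∀ s a, 0 ≤ μ s a) (hμ1 : ∀ s, ∑ a, μ s a = 1)
    (γ α τ : ℝ) (hγ0 : 0 ≤ γ) (hγ1 : γ < 1) (hα0 : 0 < α)
    (hτ : 1 / 2 < τ) (hτ1 : τ < 1) (hα1 : α ≤ 1 / (2 * τ))
    (nmax : ℕ) (hn : 1 ≤ nmax)
    (Vτ : S → ℝ) (hfix : ∀ s, Ttau f r μ γ α τ Vτ s = Vτ s)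
    (s : S) :
    (Finset.Icc 1 nmax).sup' (Finset.nonempty_Icc.mpr hn)
        (fun n => (Tmu f r μ γ)^[n - 1] (Ttau f r μ γ α τ Vτ) s) = Vτ s := by
  have hTT : Ttau f r μ γ α τ Vτ = Vτ := funext hfix
  -- T^μ Vτ ≤ Vτ
  have hTmu : ∀ t, Tmu f r μ γ Vτ t ≤ Vτ t := by
    intro t
    have h0 : ∑ a, μ t a *
        (τ * max (r t a + γ * Vτ (f t a) - Vτ t) 0 +
          (1 - τ) * min (r t a + γ * Vτ (f t a) - Vτ t) 0) = 0 := by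
      have := hfix t
      unfold Ttau at this
      have h2α : (2 : ℝ) * α ≠ 0 := by positivity
      nlinarith [this]
    have key : ∀ a : A, (1 - τ) * (r t a + γ * Vτ (f t a) - Vτ t) ≤
        τ * max (r t a + γ * Vτ (f t a) - Vτ t) 0 +
          (1 - τ) * min (r t a + γ * Vτ (f t a) - Vτ t) 0 := by
      intro a
      set δ := r t a + γ * Vτ (f t a) - Vτ t with hδ
      have hmm : δ = max δ 0 + min δ 0 := by have := max_add_min δ 0; linarith
      nlinarith [le_max_right δ 0, le_max_left δ 0]
    have hsum : (1 - τ) * ∑ a, μ t a * (r t a + γ * Vτ (f t a) - Vτ t) ≤ 0 := by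
      rw [Finset.mul_sum]
      calc ∑ a, (1 - τ) * (μ t a * (r t a + γ * Vτ (f t a) - Vτ t))
          ≤ ∑ a, μ t a *
            (τ * max (r t a + γ * Vτ (f t a) - Vτ t) 0 +
              (1 - τ) * min (r t a + γ * Vτ (f t a) - Vτ t) 0) := by
            apply Finset.sum_le_sum
            intro a _
            have := key a
            have hμ := hμ0 t a
            nlinarith
        _ = 0 := h0
    have hτ' : (0:ℝ) < 1 - τ := by linarith
    have hsum2 : ∑ a, μ t a * (r t a + γ * Vτ (f t a) - Vτ t) ≤ 0 := by
      by_contra h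
      push_neg at h
      nlinarith [hsum, hτ']
    have hexp : ∑ a, μ t a * (r t a + γ * Vτ (f t a) - Vτ t)
        = Tmu f r μ γ Vτ t - Vτ t := by
      have h2 : ∑ a, μ t a * (r t a + γ * Vτ (f t a) - Vτ t)
          = (∑ a, μ t a * (r t a + γ * Vτ (f t a))) - (∑ a, μ t a) * Vτ t := by
        rw [Finset.sum_mul, ← Finset.sum_sub_distrib]
        apply Finset.sum_congr rfl
        intro a _; ring
      rw [h2, hμ1 t]; unfold Tmu; ring
    linarith [hexp ▸ hsum2]
  -- monotonicity
  have hmono : ∀ (V W : S → ℝ), (∀ t, V t ≤ W t) → ∀ t,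
      Tmu f r μ γ V t ≤ Tmu f r μ γ W t := by
    intro V W h t
    apply Finset.sum_le_sum
    intro a _
    have hVW := h (f t a)
    exact mul_le_mul_of_nonneg_left (by nlinarith [mul_le_mul_of_nonneg_left hVW hγ0]) (hμ0 t a)
  have hiter : ∀ k t, (Tmu f r μ γ)^[k] Vτ t ≤ Vτ t := by
    intro k
    induction k with
    | zero => intro t; simp
    | succ n ih =>
      intro t
      rw [Function.iterate_succ_apply']
      exact le_trans (hmono _ _ ih t) (hTmu t)
  rw [hTT]
  apply le_antisymm
  · apply Finset.sup'_le
    intro n _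
    exact hiter (n - 1) s
  · have h1 : 1 ∈ Finset.Icc 1 nmax := Finset.mem_Icc.mpr ⟨le_refl 1, hn⟩
    have := Finset.le_sup' (fun n => (Tmu f r μ γ)^[n - 1] Vτ s) h1
    exact this
end

section
/- Monotonicity of the one-step gradient expectile operator in its value-function argument: if V₁(s) ≤ V₂(s) for all s and 2α·max(τ,1−τ) ≤ 1, then (T_τ V₁)(s) ≤ (T_τ V₂)(s) for all s. -/
open Finset

/-- Expectile hinge. -/
noncomputable def hinge (τ x : ℝ) : ℝ := τ * max x 0 + (1 - τ) * min x 0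

lemma hinge_mono {τ : ℝ} (hτ0 : 0 ≤ τ) (hτ1 : τ ≤ 1) {x y : ℝ} (hxy : x ≤ y) :
    hinge τ x ≤ hinge τ y := by
  unfold hinge
  have h1 : max x 0 ≤ max y 0 := max_le_max hxy le_rfl
  have h2 : min x 0 ≤ min y 0 := min_le_min hxy le_rfl
  have := mul_le_mul_of_nonneg_left h1 hτ0
  have := mul_le_mul_of_nonneg_left h2 (by linarith : (0:ℝ) ≤ 1 - τ)
  linarith

lemma hinge_lip {τ : ℝ} (hτ0 : 0 ≤ τ) (hτ1 : τ ≤ 1) {x y : ℝ} (hxy : y ≤ x) :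
    hinge τ x - hinge τ y ≤ max τ (1 - τ) * (x - y) := by
  unfold hinge
  have hA : max x 0 - max y 0 ≤ x - y := by
    rcases le_total x 0 with h | h <;> rcases le_total y 0 with h' | h' <;>
      simp [max_eq_left, max_eq_right, *] <;> nlinarith
  have hA0 : 0 ≤ max x 0 - max y 0 := by
    have := max_le_max hxy (le_refl (0:ℝ)); linarith
  have hB : min x 0 - min y 0 ≤ x - y := by
    rcases le_total x 0 with h | h <;> rcases le_total y 0 with h' | h' <;>
      simp [min_eq_left, min_eq_right, *] <;> nlinarith
  have hB0 : 0 ≤ min x 0 - min y 0 := by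
    have := min_le_min hxy (le_refl (0:ℝ)); linarith
  have hsum : (max x 0 - max y 0) + (min x 0 - min y 0) = x - y := by
    have hx : max x 0 + min x 0 = x := by rw [max_add_min]; ring
    have hy : max y 0 + min y 0 = y := by rw [max_add_min]; ring
    linarith
  have hM1 : τ ≤ max τ (1 - τ) := le_max_left _ _
  have hM2 : 1 - τ ≤ max τ (1 - τ) := le_max_right _ _
  nlinarith [mul_le_mul_of_nonneg_right hM1 hA0, mul_le_mul_of_nonneg_right hM2 hB0]

/-- Monotonicity of the one-step gradient expectile operator in its value-function
argument. -/
theorem Ttau_monotone_in_V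
    {S A : Type*} [Fintype A] (f : S → A → S) (r : S → A → ℝ)
    (μ : S → A → ℝ) (hμ0 : ∀ s a, 0 ≤ μ s a) (hμ1 : ∀ s, ∑ a, μ s a = 1)
    (γ α τ : ℝ) (hγ0 : 0 ≤ γ) (hγ1 : γ < 1) (hα0 : 0 < α)
    (hτ0 : 0 < τ) (hτ1 : τ < 1) (h1 : 2 * α * τ ≤ 1) (h2 : 2 * α * (1 - τ) ≤ 1)
    (V₁ V₂ : S → ℝ) (hle : ∀ s, V₁ s ≤ V₂ s) (s : S) :
    Ttau f r μ γ α τ V₁ s ≤ Ttau f r μ γ α τ V₂ s := by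
  have hτ0' : (0:ℝ) ≤ τ := hτ0.le
  have hτ1' : τ ≤ 1 := hτ1.le
  have hM : 2 * α * max τ (1 - τ) ≤ 1 := by
    rcases max_cases τ (1 - τ) with ⟨h, _⟩ | ⟨h, _⟩ <;> rw [h] <;> assumption
  have h2α : (0:ℝ) ≤ 2 * α := by linarith
  -- rewrite Ttau as a single expectation
  have key : ∀ (V : S → ℝ), Ttau f r μ γ α τ V s =
      ∑ a, μ s a * (V s + 2 * α * hinge τ (r s a + γ * V (f s a) - V s)) := by
    intro V
    unfold Ttau hinge
    rw [Finset.mul_sum]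
    have : ∀ a ∈ Finset.univ (α := A),
        μ s a * (V s + 2 * α * (τ * max (r s a + γ * V (f s a) - V s) 0 +
          (1 - τ) * min (r s a + γ * V (f s a) - V s) 0)) =
        μ s a * V s + 2 * α * (μ s a * (τ * max (r s a + γ * V (f s a) - V s) 0 +
          (1 - τ) * min (r s a + γ * V (f s a) - V s) 0)) := by
      intro a _; ring
    rw [Finset.sum_congr rfl this, Finset.sum_add_distrib, ← Finset.sum_mul, hμ1 s, one_mul]
  rw [key V₁, key V₂]
  apply Finset.sum_le_sum
  intro a _
  apply mul_le_mul_of_nonneg_left _ (hμ0 s a)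
  set v₁ := V₁ s
  set v₂ := V₂ s
  have hw : γ * V₁ (f s a) ≤ γ * V₂ (f s a) := mul_le_mul_of_nonneg_left (hle _) hγ0
  have hv : v₁ ≤ v₂ := hle s
  -- step 1: increase the successor value
  have step1 : hinge τ (r s a + γ * V₁ (f s a) - v₁) ≤
      hinge τ (r s a + γ * V₂ (f s a) - v₁) :=
    hinge_mono hτ0' hτ1' (by linarith)
  -- step 2: increase the current value
  have step2 : v₁ + 2 * α * hinge τ (r s a + γ * V₂ (f s a) - v₁) ≤
      v₂ + 2 * α * hinge τ (r s a + γ * V₂ (f s a) - v₂) := by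
    have hl := hinge_lip hτ0' hτ1'
      (x := r s a + γ * V₂ (f s a) - v₁) (y := r s a + γ * V₂ (f s a) - v₂) (by linarith)
    have : max τ (1 - τ) * (r s a + γ * V₂ (f s a) - v₁ - (r s a + γ * V₂ (f s a) - v₂))
        = max τ (1 - τ) * (v₂ - v₁) := by ring_nf
    rw [this] at hl
    nlinarith [mul_le_mul_of_nonneg_left hl h2α,
      mul_le_mul_of_nonneg_right hM (by linarith : (0:ℝ) ≤ v₂ - v₁)]
  nlinarith [mul_le_mul_of_nonneg_left step1 h2α]
end

section
/- Recursive return bound: given a finite trajectory (s₀,…,s_T) with rewards r₀,…,r_T, define R̂_T = r_T and R̂_t = r_t + γ·max(R̂_{t+1}, V(s_{t+1})) for t < T. Then R̂_t = max_{0 < n ≤ T−t+1} V̂_{t,n}, where V̂_{t,n} = r_t + γ·V̂_{t+1,n−1} for n > 0 and V̂_{t,0} = V(s_t), i.e., the backward recursion equals the maximum over all n-step bootstrapped returns. -/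
open Finset

lemma sup'_affine (s : Finset ℕ) (hs : s.Nonempty) (a γ : ℝ) (hγ : 0 ≤ γ) (f : ℕ → ℝ) :
    s.sup' hs (fun n => a + γ * f n) = a + γ * s.sup' hs f := by
  apply le_antisymm
  · apply Finset.sup'_le
    intro b hb
    have := Finset.le_sup' f hb
    nlinarith
  · obtain ⟨b, hb, hbe⟩ := Finset.exists_mem_eq_sup' hs f
    rw [hbe]
    exact Finset.le_sup' (fun n => a + γ * f n) hb

/-- The backward max-recursion over a trajectory computes exactly the maximum over
rollout lengths of the n-step bootstrapped returns. -/
theorem backward_recursion_eq_max_nstep_returns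
    (γ : ℝ) (hγ0 : 0 ≤ γ) (hγ1 : γ < 1)
    (T : ℕ) (rw : ℕ → ℝ) (v : ℕ → ℝ)
    (Rhat : ℕ → ℝ)
    (hRT : Rhat T = rw T)
    (hR : ∀ t, t < T → Rhat t = rw t + γ * max (Rhat (t + 1)) (v (t + 1)))
    (Vhat : ℕ → ℕ → ℝ)
    (hV0 : ∀ t, Vhat t 0 = v t)
    (hVT : ∀ n, 0 < n → Vhat T n = rw T)
    (hVt : ∀ t, t < T → ∀ n, 0 < n → Vhat t n = rw t + γ * Vhat (t + 1) (n - 1)) :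
    ∀ t, t ≤ T →
      Rhat t = (Finset.Icc 1 (T - t + 1)).sup'
        (Finset.nonempty_Icc.mpr (by omega)) (fun n => Vhat t n) := by
  suffices H : ∀ k t (ht : t ≤ T), T - t = k →
      Rhat t = (Finset.Icc 1 (T - t + 1)).sup'
        (Finset.nonempty_Icc.mpr (by omega)) (fun n => Vhat t n) by
    intro t ht; exact H (T - t) t ht rfl
  intro k
  induction k with
  | zero =>
    intro t ht hk
    have htT : T = t := by omega
    subst htT
    simp only [Nat.sub_self, Nat.zero_add]
    rw [hRT]
    symm
    apply le_antisymm
    · refine Finset.sup'_le _ _ fun x hx => ?_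
      have hx1 : x = 1 := by simp [Finset.mem_Icc] at hx; omega
      subst hx1; rw [hVT 1 one_pos]
    · have h := Finset.le_sup' (fun x => Vhat T x) (show (1:ℕ) ∈ Finset.Icc 1 1 by simp)
      rwa [hVT 1 one_pos] at h
  | succ k ih =>
    intro t ht hk
    have htT : t < T := by omega
    have hk' : T - (t + 1) = k := by omega
    have hIH := ih (t + 1) (by omega) hk'
    have h1 : T - (t + 1) + 1 = k + 1 := by omega
    simp only [h1] at hIH
    have h2 : T - t + 1 = k + 2 := by omega
    -- rewrite target sup' domain
    have himg : Finset.Icc 1 (k + 2) = Finset.image (· + 1) (Finset.Icc 0 (k + 1)) := by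
      ext x
      simp only [Finset.mem_Icc, Finset.mem_image]
      constructor
      · intro hx; exact ⟨x - 1, by omega, by omega⟩
      · rintro ⟨y, hy, rfl⟩; omega
    have hne : (Finset.Icc 0 (k + 1)).Nonempty := Finset.nonempty_Icc.mpr (by omega)
    have key : (Finset.Icc 1 (T - t + 1)).sup'
        (Finset.nonempty_Icc.mpr (by omega)) (fun n => Vhat t n)
        = (Finset.Icc 0 (k + 1)).sup' hne (fun m => rw t + γ * Vhat (t + 1) m) := by
      simp_rw [h2, himg]
      rw [Finset.sup'_image]
      apply Finset.sup'_congr _ rfl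
      intro m hm
      simp only [Function.comp]
      rw [hVt t htT (m + 1) (by omega)]
      simp
    rw [key, sup'_affine _ _ _ _ hγ0]
    -- split Icc 0 (k+1) = insert 0 (Icc 1 (k+1))
    have hins : Finset.Icc 0 (k + 1) = insert 0 (Finset.Icc 1 (k + 1)) := by
      ext x; simp [Finset.mem_Icc]; omega
    have hsplit : (Finset.Icc 0 (k + 1)).sup' hne (fun m => Vhat (t + 1) m)
        = max (Vhat (t + 1) 0)
          ((Finset.Icc 1 (k + 1)).sup' (Finset.nonempty_Icc.mpr (by omega))
            (fun m => Vhat (t + 1) m)) := by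
      simp_rw [hins]
      rw [Finset.sup'_insert]
    rw [hsplit, hV0, hR t htT, hIH, max_comm]
end
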